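/- (Essential kernel pruning) Let Ω₁ and Ω₂ be disjoint nonempty finite sets, let A ≤ Sym(Ω₁) and B ≤ Sym(Ω₂) be transitive permutation groups, let N_A ⊴ A, N_B ⊴ B, and let φ : A/N_A → B/N_B be a group isomorphism. Let C = {(a,b) ∈ A × B : φ(a·N_A) = b·N_B}, acting on the disjoint union Ω₁ ⊔ Ω₂ with (a,b) acting as a on Ω₁ and as b on Ω₂. If there exists a proper subgroup M < A that is transitive on Ω₁ and satisfies N_A · M = A, then C has a proper subgroup that is transitive on Ω₁ and transitive on Ω₂; in particular C is not minimal as a two-orbit permutation group on Ω₁ ⊔ Ω₂. -/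
import Mathlib



/-- The Goursat fiber product `C = {(a, b) ∈ A × B : φ (a N_A) = b N_B}`. -/
def goursatFiber {A B : Type*} [Group A] [Group B] (NA : Subgroup A) (NB : Subgroup B)
    [NA.Normal] [NB.Normal] (φ : A ⧸ NA ≃* B ⧸ NB) : Subgroup (A × B) where
  carrier := {p | φ (QuotientGroup.mk p.1) = QuotientGroup.mk p.2}
  one_mem' := by simp
  mul_mem' := by
    intro p q hp hq
    simp only [Set.mem_setOf_eq, Prod.fst_mul, Prod.snd_mul, QuotientGroup.mk_mul,
      map_mul] at *
    rw [hp, hq]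
  inv_mem' := by
    intro p hp
    simp only [Set.mem_setOf_eq, Prod.fst_inv, Prod.snd_inv, QuotientGroup.mk_inv,
      map_inv] at *
    rw [hp]

/-- **Essential kernel pruning.**
Let `Ω₁, Ω₂` be (disjoint) nonempty finite sets, `A ≤ Sym(Ω₁)`, `B ≤ Sym(Ω₂)`
transitive permutation groups, `N_A ⊴ A`, `N_B ⊴ B`, and `φ : A ⧸ N_A ≃* B ⧸ N_B`.
Let `C = {(a, b) ∈ A × B : φ (a N_A) = b N_B}` act on `Ω₁ ⊔ Ω₂` with `(a, b)`
acting as `a` on `Ω₁` and as `b` on `Ω₂`.  If there is a proper subgroup `M < A`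
that is transitive on `Ω₁` with `N_A · M = A`, then `C` has a proper subgroup that
is transitive on `Ω₁` and on `Ω₂`; in particular `C` is not minimal as a two-orbit
permutation group on `Ω₁ ⊔ Ω₂`. -/
theorem essential_kernel_pruning {Ω₁ Ω₂ : Type*}
    [Finite Ω₁] [Finite Ω₂] [Nonempty Ω₁] [Nonempty Ω₂]
    (A : Subgroup (Equiv.Perm Ω₁)) (B : Subgroup (Equiv.Perm Ω₂))
    (hAtrans : ∀ x y : Ω₁, ∃ a ∈ A, a x = y)
    (hBtrans : ∀ x y : Ω₂, ∃ b ∈ B, b x = y)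
    (NA : Subgroup A) (NB : Subgroup B) [NA.Normal] [NB.Normal]
    (φ : A ⧸ NA ≃* B ⧸ NB)
    (M : Subgroup A) (hMlt : M < ⊤)
    (hMtrans : ∀ x y : Ω₁, ∃ m ∈ M, ((m : A) : Equiv.Perm Ω₁) x = y)
    (hNAM : ∀ a : A, ∃ n ∈ NA, ∃ m ∈ M, a = n * m) :
    ∃ D : Subgroup (A × B), D < goursatFiber NA NB φ ∧
      (∀ x y : Ω₁, ∃ p ∈ D, ((p.1 : A) : Equiv.Perm Ω₁) x = y) ∧
      (∀ x y : Ω₂, ∃ p ∈ D, ((p.2 : B) : Equiv.Perm Ω₂) x = y) := by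
  refine ⟨goursatFiber NA NB φ ⊓ M.prod ⊤, ?_, ?_, ?_⟩
  · refine lt_of_le_of_ne inf_le_left ?_
    intro h
    obtain ⟨a, -, haM⟩ := SetLike.exists_of_lt hMlt
    obtain ⟨b, hb⟩ := QuotientGroup.mk_surjective (φ (QuotientGroup.mk a))
    have hmem : (a, b) ∈ goursatFiber NA NB φ := hb.symm
    rw [← h] at hmem
    exact haM hmem.2.1
  · intro x y
    obtain ⟨m, hm, hmx⟩ := hMtrans x y
    obtain ⟨b, hb⟩ := QuotientGroup.mk_surjective (φ (QuotientGroup.mk m))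
    exact ⟨(m, b), ⟨hb.symm, hm, trivial⟩, hmx⟩
  · intro x y
    obtain ⟨b, hbB, hbx⟩ := hBtrans x y
    obtain ⟨a, ha⟩ := QuotientGroup.mk_surjective (φ.symm (QuotientGroup.mk (⟨b, hbB⟩ : B)))
    obtain ⟨n, hn, m, hm, rfl⟩ := hNAM a
    have hmk : (QuotientGroup.mk m : A ⧸ NA) = QuotientGroup.mk (n * m) := by
      rw [QuotientGroup.mk_mul, QuotientGroup.eq_one_iff n |>.mpr hn, one_mul]
    have : φ (QuotientGroup.mk m) = QuotientGroup.mk (⟨b, hbB⟩ : B) := by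
      rw [hmk, ha, φ.apply_symm_apply]
    exact ⟨(m, ⟨b, hbB⟩), ⟨this, hm, trivial⟩, hbx⟩
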